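/- arXiv:1303.5456 — 2 statements merged into one kernel-verified Lean document; each statement's English description precedes it below -/
import Mathlib

section
/- Let G = (V, E) be a weakly connected directed graph whose underlying undirected graph is not bipartite, and A an Abelian group. Then the group of balanced functions h : V ∪ 𝔼 → A is isomorphic to A₂ × A^(|V|-1), where A₂ = {a ∈ A : 2a = 0}. -/
/-- A directed multigraph: edges with a source and a target vertex. -/
structure Dgraph (V : Type) (E : Type) where
  src : E → V
  tgt : E → V

namespace Dgraph

variable {V E : Type}

/-- The symmetrization of a digraph: each edge together with its formal reversal.
`Sum.inl e` is the edge `e` itself, `Sum.inr e` is its reversal `ē`. -/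
def sym (G : Dgraph V E) : Dgraph V (E ⊕ E) where
  src := Sum.elim G.src G.tgt
  tgt := Sum.elim G.tgt G.src

/-- A cycle: a list of pairwise distinct edges, consecutively incident,
and closed (the target of the last edge is the source of the first).
The empty list is the trivial cycle. -/
def IsCycle (G : Dgraph V E) (l : List E) : Prop :=
  l.Nodup ∧ l.Chain' (fun a b => G.tgt a = G.src b) ∧
    ∀ h : l ≠ [], G.tgt (l.getLast h) = G.src (l.head h)

/-- Adjacency in the underlying undirected graph. -/
def Adj (G : Dgraph V E) (x y : V) : Prop :=
  ∃ e, (G.src e = x ∧ G.tgt e = y) ∨ (G.src e = y ∧ G.tgt e = x)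

/-- Weak connectivity: the underlying undirected graph is connected. -/
def WeaklyConnected (G : Dgraph V E) : Prop :=
  ∀ x y : V, Relation.ReflTransGen G.Adj x y

/-- The underlying undirected graph is bipartite. -/
def Bipartite (G : Dgraph V E) : Prop :=
  ∃ c : V → Bool, ∀ e, c (G.src e) ≠ c (G.tgt e)

variable (A : Type) [AddCommGroup A]

/-- A function on the symmetrized edge set taking opposite values on reversed edges. -/
def Antisym (f : E ⊕ E → A) : Prop :=
  ∀ e : E, f (Sum.inr e) = - f (Sum.inl e)

/-- A function on edges is balanced if its sum along every cycle is zero. -/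
def BalancedE (G : Dgraph V E) (f : E → A) : Prop :=
  ∀ l : List E, G.IsCycle l → (l.map f).sum = 0

/-- A pair of a function `g` on vertices and `f` on edges is balanced if the
alternating sum `g v₁ + f e₁ + ⋯ + g vₙ + f eₙ` along every cycle is zero
(the vertices of a cycle are exactly the sources of its edges). -/
def BalancedVE (G : Dgraph V E) (g : V → A) (f : E → A) : Prop :=
  ∀ l : List E, G.IsCycle l → (l.map (fun e => g (G.src e) + f e)).sum = 0

variable {A}

lemma sum_map_add (l : List E) (f g : E → A) :
    (l.map (fun e => f e + g e)).sum = (l.map f).sum + (l.map g).sum := by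
  induction l with
  | nil => simp
  | cons a t ih => simp only [List.map_cons, List.sum_cons, ih]; abel

lemma sum_map_neg (l : List E) (f : E → A) :
    (l.map (fun e => - f e)).sum = - (l.map f).sum := by
  induction l with
  | nil => simp
  | cons a t ih => simp only [List.map_cons, List.sum_cons, ih]; abel

lemma sum_map_eq_zero (l : List E) (f : E → A) (h : ∀ e, f e = 0) :
    (l.map f).sum = 0 := by
  induction l with
  | nil => simp
  | cons a t ih => simp [h, ih]

variable (A)

/-- `HF(𝔼, A)`: the group of flexible-balanced functions on the symmetrized edges. -/
def HF (G : Dgraph V E) : AddSubgroup ((E ⊕ E) → A) where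
  carrier := {f | Antisym A f ∧ BalancedE A G.sym f}
  zero_mem' :=
    ⟨fun e => by simp, fun l _ => sum_map_eq_zero l _ (fun e => by simp)⟩
  add_mem' := by
    intro f g hf hg
    refine ⟨fun e => ?_, fun l hl => ?_⟩
    · have h1 := hf.1 e; have h2 := hg.1 e
      simp only [Pi.add_apply]
      rw [h1, h2]; abel
    · have hmap : l.map (f + g) = l.map (fun e => f e + g e) := rfl
      rw [hmap, sum_map_add l f g, hf.2 l hl, hg.2 l hl, add_zero]
  neg_mem' := by
    intro f hf
    refine ⟨fun e => ?_, fun l hl => ?_⟩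
    · simp only [Pi.neg_apply]; rw [hf.1 e]
    · have hmap : l.map (-f) = l.map (fun e => - f e) := rfl
      rw [hmap, sum_map_neg l f, hf.2 l hl, neg_zero]

/-- `WF(V ∪ 𝔼, A)`: the group of flexible-balanced functions on vertices and edges,
encoded as pairs (function on vertices, function on symmetrized edges). -/
def WF (G : Dgraph V E) : AddSubgroup ((V → A) × ((E ⊕ E) → A)) where
  carrier := {p | Antisym A p.2 ∧ BalancedVE A G.sym p.1 p.2}
  zero_mem' :=
    ⟨fun e => by simp, fun l _ => sum_map_eq_zero l _ (fun e => by simp)⟩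
  add_mem' := by
    intro p q hp hq
    refine ⟨fun e => ?_, fun l hl => ?_⟩
    · have h1 := hp.1 e; have h2 := hq.1 e
      simp only [Prod.snd_add, Pi.add_apply]
      rw [h1, h2]; abel
    · have h := sum_map_add l (fun e => p.1 (G.sym.src e) + p.2 e)
        (fun e => q.1 (G.sym.src e) + q.2 e)
      simp only [Prod.fst_add, Prod.snd_add, Pi.add_apply]
      have heq : (l.map (fun e => (p.1 (G.sym.src e) + q.1 (G.sym.src e)) + (p.2 e + q.2 e))).sum
          = (l.map (fun e => (p.1 (G.sym.src e) + p.2 e) + (q.1 (G.sym.src e) + q.2 e))).sum := by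
        congr 1; apply List.map_congr_left; intro e _; abel
      rw [heq, h, hp.2 l hl, hq.2 l hl, add_zero]
  neg_mem' := by
    intro p hp
    refine ⟨fun e => ?_, fun l hl => ?_⟩
    · simp only [Prod.snd_neg, Pi.neg_apply]; rw [hp.1 e]
    · have h := sum_map_neg l (fun e => p.1 (G.sym.src e) + p.2 e)
      simp only [Prod.fst_neg, Prod.snd_neg, Pi.neg_apply]
      have heq : (l.map (fun e => -p.1 (G.sym.src e) + -p.2 e)).sum
          = (l.map (fun e => -(p.1 (G.sym.src e) + p.2 e))).sum := by
        congr 1; apply List.map_congr_left; intro e _; abel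
      rw [heq, h, hp.2 l hl, neg_zero]

/-- `BF(V, A)`: the group of flexible-balanceable functions on vertices. -/
def BF (G : Dgraph V E) : AddSubgroup (V → A) where
  carrier := {g | ∃ f : (E ⊕ E) → A, (g, f) ∈ WF A G}
  zero_mem' := ⟨0, (WF A G).zero_mem⟩
  add_mem' := by
    rintro g1 g2 ⟨f1, h1⟩ ⟨f2, h2⟩
    exact ⟨f1 + f2, (WF A G).add_mem h1 h2⟩
  neg_mem' := by
    rintro g ⟨f, h⟩
    exact ⟨-f, (WF A G).neg_mem h⟩

/-- The subgroup of elements of order dividing 2. -/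
def Two : AddSubgroup A where
  carrier := {a | a + a = 0}
  zero_mem' := by simp
  add_mem' := by
    intro a b ha hb
    have h : a + b + (a + b) = (a + a) + (b + b) := by abel
    simp only [Set.mem_setOf_eq] at *
    rw [h, ha, hb, add_zero]
  neg_mem' := by
    intro a ha
    simp only [Set.mem_setOf_eq] at *
    rw [← neg_add]; simp [ha]

/-- `HR(E, A)`: the group of rigid-balanced functions on edges. -/
def HR (G : Dgraph V E) : AddSubgroup (E → A) where
  carrier := {f | BalancedE A G f}
  zero_mem' := fun l _ => sum_map_eq_zero l _ (fun e => by simp)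
  add_mem' := by
    intro f g hf hg l hl
    have hmap : l.map (f + g) = l.map (fun e => f e + g e) := rfl
    rw [hmap, sum_map_add l f g, hf l hl, hg l hl, add_zero]
  neg_mem' := by
    intro f hf l hl
    have hmap : l.map (-f) = l.map (fun e => - f e) := rfl
    rw [hmap, sum_map_neg l f, hf l hl, neg_zero]

/-- `WR(V ∪ E, A)`: the group of rigid-balanced functions on vertices and edges,
encoded as pairs (function on vertices, function on edges). -/
def WR (G : Dgraph V E) : AddSubgroup ((V → A) × (E → A)) where
  carrier := {p | BalancedVE A G p.1 p.2}
  zero_mem' := fun l _ => sum_map_eq_zero l _ (fun e => by simp)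
  add_mem' := by
    intro p q hp hq l hl
    have h := sum_map_add l (fun e => p.1 (G.src e) + p.2 e)
      (fun e => q.1 (G.src e) + q.2 e)
    simp only [Prod.fst_add, Prod.snd_add, Pi.add_apply]
    have heq : (l.map (fun e => (p.1 (G.src e) + q.1 (G.src e)) + (p.2 e + q.2 e))).sum
        = (l.map (fun e => (p.1 (G.src e) + p.2 e) + (q.1 (G.src e) + q.2 e))).sum := by
      congr 1; apply List.map_congr_left; intro e _; abel
    rw [heq, h, hp l hl, hq l hl, add_zero]
  neg_mem' := by
    intro p hp l hl
    have h := sum_map_neg l (fun e => p.1 (G.src e) + p.2 e)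
    simp only [Prod.fst_neg, Prod.snd_neg, Pi.neg_apply]
    have heq : (l.map (fun e => -p.1 (G.src e) + -p.2 e)).sum
        = (l.map (fun e => -(p.1 (G.src e) + p.2 e))).sum := by
      congr 1; apply List.map_congr_left; intro e _; abel
    rw [heq, h, hp l hl, neg_zero]

variable {A}

/-- One-step directed reachability. -/
def Step (G : Dgraph V E) (x y : V) : Prop := ∃ e, G.src e = x ∧ G.tgt e = y

/-- Directed reachability. -/
def Reach (G : Dgraph V E) : V → V → Prop := Relation.ReflTransGen G.Step

/-- Every vertex is reachable from every other vertex by a directed path. -/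
def StronglyConnected (G : Dgraph V E) : Prop := ∀ x y : V, G.Reach x y

/-- Mutual directed reachability as an equivalence (setoid) on vertices;
its classes are the strongly connected components. -/
def scSetoid (G : Dgraph V E) : Setoid V where
  r x y := G.Reach x y ∧ G.Reach y x
  iseqv := ⟨fun _ => ⟨.refl, .refl⟩, fun h => ⟨h.2, h.1⟩,
    fun h1 h2 => ⟨h1.1.trans h2.1, h2.2.trans h1.2⟩⟩

/-- The number `k̄(G)` of strongly connected components. -/
noncomputable def numSCC (G : Dgraph V E) : ℕ := Nat.card (Quotient G.scSetoid)

/-- The number `r(G)` of edges joining vertices in distinct strongly connected components. -/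
noncomputable def numCrossEdges (G : Dgraph V E) : ℕ :=
  Nat.card {e : E // ¬ G.scSetoid.r (G.src e) (G.tgt e)}

/-- A directed path from `x` to `y`: pairwise distinct, consecutively incident edges,
starting at `x` and ending at `y`; the empty path joins each vertex to itself. -/
def IsPathFrom (G : Dgraph V E) (l : List E) (x y : V) : Prop :=
  l.Nodup ∧ l.Chain' (fun a b => G.tgt a = G.src b) ∧
    ((l = [] ∧ x = y) ∨ ∃ h : l ≠ [], G.src (l.head h) = x ∧ G.tgt (l.getLast h) = y)

/-- Reorientation of the edges: edge `e` keeps its direction iff `o e = true`. -/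
def orient (G : Dgraph V E) (o : E → Bool) : Dgraph V E where
  src e := if o e then G.src e else G.tgt e
  tgt e := if o e then G.tgt e else G.src e

/-- The underlying edge of a symmetrized edge. -/
def proj : E ⊕ E → E := Sum.elim id id

/-- A cycle in the underlying *undirected* graph: edges may be traversed in either
direction, and the underlying edges are pairwise distinct. -/
def IsUCycle (G : Dgraph V E) (l : List (E ⊕ E)) : Prop :=
  (l.map proj).Nodup ∧ l.Chain' (fun a b => G.sym.tgt a = G.sym.src b) ∧
    ∀ h : l ≠ [], G.sym.tgt (l.getLast h) = G.sym.src (l.head h)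

variable (A)

/-- A function on the edges of an undirected graph is balanced if its sum along
every undirected cycle (each edge contributing its value regardless of the
traversal direction) is zero. -/
def UBalanced (G : Dgraph V E) (f : E → A) : Prop :=
  ∀ l : List (E ⊕ E), G.IsUCycle l → (l.map (fun ee => f (proj ee))).sum = 0

/-- The subgroup of functions on vertices vanishing at a chosen base vertex. -/
def vanishing (v₀ : V) : AddSubgroup (V → A) where
  carrier := {g | g v₀ = 0}
  zero_mem' := by simp
  add_mem' := by
    intro a b ha hb
    simp only [Set.mem_setOf_eq, Pi.add_apply] at *
    rw [ha, hb, add_zero]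
  neg_mem' := by
    intro a ha
    simp only [Set.mem_setOf_eq, Pi.neg_apply] at *
    rw [ha, neg_zero]

variable {A}

/-- The subgraph induced by a strongly connected component `j`. -/
def compGraph (G : Dgraph V E) (j : Quotient G.scSetoid) :
    Dgraph {v : V // Quotient.mk G.scSetoid v = j}
      {e : E // Quotient.mk G.scSetoid (G.src e) = j ∧ Quotient.mk G.scSetoid (G.tgt e) = j} where
  src e := ⟨G.src e.1, e.2.1⟩
  tgt e := ⟨G.tgt e.1, e.2.2⟩

end Dgraph


/-! A balanced pair `(g, f)` sums to zero on the 2-cycle `e ē`, so `g (src e) + g (tgt e) = 0`: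
along the connected graph `g` alternates between `c` and `-c`, and an odd cycle forces `c = -c`.
Hence `g` is the constant `c ∈ A₂`, and `f + c` is antisymmetric with zero sum on every cycle,
hence on every closed walk, so it is the coboundary `δp` of a potential with `p v₀ = 0`.
Conversely `(c, δp + c)` is balanced for every `c ∈ A₂` and every `p`, which gives
`A₂ × {p | p v₀ = 0} ≃+ WF`. -/

namespace List

theorem exists_eq_append_cons_append_cons_of_not_nodup {α : Type*} :
    ∀ {l : List α}, ¬ l.Nodup → ∃ (a : α) (s t u : List α), l = s ++ a :: (t ++ a :: u)
  | [], h => absurd nodup_nil h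
  | b :: l, h => by
    by_cases hb : b ∈ l
    · obtain ⟨t, u, rfl⟩ := mem_iff_append.mp hb
      exact ⟨b, [], t, u, rfl⟩
    · obtain ⟨a, s, t, u, rfl⟩ :=
        exists_eq_append_cons_append_cons_of_not_nodup fun hl => h (nodup_cons.mpr ⟨hb, hl⟩)
      exact ⟨a, b :: s, t, u, rfl⟩

end List

namespace Dgraph

variable {V E F A : Type} [AddCommGroup A]

def IsWalk (H : Dgraph V F) : V → List F → V → Prop
  | x, [], y => x = y
  | x, e :: l, y => H.src e = x ∧ H.IsWalk (H.tgt e) l y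

theorem isWalk_singleton {H : Dgraph V F} (e : F) : H.IsWalk (H.src e) [e] (H.tgt e) :=
  ⟨rfl, rfl⟩

namespace IsWalk

variable {H : Dgraph V F}

theorem append : ∀ {l m : List F} {x y z : V},
    H.IsWalk x l y → H.IsWalk y m z → H.IsWalk x (l ++ m) z
  | [], _, _, _, _, rfl, h => h
  | _ :: _, _, _, _, _, ⟨h₁, h₂⟩, h => ⟨h₁, append h₂ h⟩

theorem of_append : ∀ {l m : List F} {x z : V},
    H.IsWalk x (l ++ m) z → ∃ y, H.IsWalk x l y ∧ H.IsWalk y m z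
  | [], _, x, _, h => ⟨x, rfl, h⟩
  | _ :: _, _, _, _, ⟨h₁, h₂⟩ =>
    let ⟨y, hl, hm⟩ := of_append h₂
    ⟨y, ⟨h₁, hl⟩, hm⟩

theorem isChain : ∀ {l : List F} {x y : V}, H.IsWalk x l y →
    l.IsChain (fun a b => H.tgt a = H.src b)
  | [], _, _, _ => List.isChain_nil
  | [_], _, _, _ => List.isChain_singleton _
  | _ :: _ :: _, _, _, ⟨_, h₁, h₂⟩ => List.IsChain.cons_cons h₁.symm (isChain ⟨h₁, h₂⟩)

theorem src_head : ∀ {l : List F} {x y : V} (hl : l ≠ []), H.IsWalk x l y → H.src (l.head hl) = x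
  | _ :: _, _, _, _, h => h.1

theorem tgt_getLast : ∀ {l : List F} {x y : V} (hl : l ≠ []), H.IsWalk x l y →
    H.tgt (l.getLast hl) = y
  | [_], _, _, _, ⟨_, h⟩ => h
  | _ :: _ :: _, _, _, _, ⟨_, h⟩ => by
    rw [List.getLast_cons (List.cons_ne_nil _ _)]
    exact tgt_getLast (List.cons_ne_nil _ _) h

theorem isCycle {l : List F} {x : V} (h : H.IsWalk x l x) (hl : l.Nodup) : H.IsCycle l :=
  ⟨hl, h.isChain, fun hne => by rw [h.tgt_getLast hne, h.src_head hne]⟩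

theorem sum_map_sub (p : V → A) : ∀ {l : List F} {x y : V}, H.IsWalk x l y →
    (l.map fun e => p (H.tgt e) - p (H.src e)).sum = p y - p x
  | [], _, _, rfl => by simp
  | _ :: _, _, _, ⟨h₁, h₂⟩ => by
    rw [List.map_cons, List.sum_cons, sum_map_sub p h₂, h₁]
    abel

end IsWalk

theorem isWalk_of_isChain {H : Dgraph V F} : ∀ {l : List F} (hl : l ≠ []),
    l.IsChain (fun a b => H.tgt a = H.src b) →
      H.IsWalk (H.src (l.head hl)) l (H.tgt (l.getLast hl))
  | [_], _, _ => ⟨rfl, rfl⟩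
  | _ :: b :: _, _, h => by
    obtain ⟨hab, h⟩ := List.isChain_cons_cons.mp h
    exact ⟨rfl, hab ▸ isWalk_of_isChain (List.cons_ne_nil _ _) h⟩

theorem IsCycle.isWalk {H : Dgraph V F} {l : List F} (h : H.IsCycle l) (hl : l ≠ []) :
    H.IsWalk (H.src (l.head hl)) l (H.src (l.head hl)) :=
  h.2.2 hl ▸ isWalk_of_isChain hl h.2.1

/-- A closed walk decomposes into cycles, so it inherits their zero sums. -/
theorem BalancedE.sum_eq_zero_of_isWalk {H : Dgraph V F} {f : F → A} (hf : BalancedE A H f)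
    {l : List F} {x : V} (hl : H.IsWalk x l x) : (l.map f).sum = 0 := by
  induction hn : l.length using Nat.strong_induction_on generalizing l x with
  | _ n ih =>
  by_cases hnd : l.Nodup
  · exact hf l (hl.isCycle hnd)
  obtain ⟨a, s, t, u, rfl⟩ := List.exists_eq_append_cons_append_cons_of_not_nodup hnd
  obtain ⟨y, hs, ha, htu⟩ := hl.of_append
  obtain ⟨z, ht, hz, hu⟩ := IsWalk.of_append htu
  have hinner : H.IsWalk (H.src a) (a :: t) (H.src a) := ⟨rfl, hz ▸ ht⟩
  have houter : H.IsWalk x (s ++ a :: u) x := hs.append ⟨ha, hu⟩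
  have hsplit : ((s ++ a :: (t ++ a :: u)).map f).sum
      = ((a :: t).map f).sum + ((s ++ a :: u).map f).sum := by
    simp only [List.map_append, List.map_cons, List.sum_append, List.sum_cons]
    abel
  simp only [List.length_append, List.length_cons] at hn
  rw [hsplit, ih _ (by simp only [List.length_cons]; omega) hinner rfl,
    ih _ (by simp only [List.length_append, List.length_cons]; omega) houter rfl, add_zero]

section Sym

variable {G : Dgraph V E}

@[simp] theorem sym_src_swap (ee : E ⊕ E) : G.sym.src ee.swap = G.sym.tgt ee := by
  cases ee <;> rfl

@[simp] theorem sym_tgt_swap (ee : E ⊕ E) : G.sym.tgt ee.swap = G.sym.src ee := by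
  cases ee <;> rfl

theorem IsWalk.reverse_swap : ∀ {l : List (E ⊕ E)} {x y : V},
    G.sym.IsWalk x l y → G.sym.IsWalk y (l.reverse.map Sum.swap) x
  | [], _, _, rfl => rfl
  | ee :: _, _, _, ⟨h₁, h₂⟩ => by
    rw [List.reverse_cons, List.map_append]
    exact h₂.reverse_swap.append (h₁ ▸ sym_src_swap ee ▸ sym_tgt_swap ee ▸ isWalk_singleton _)

theorem exists_isWalk_sym {x y : V} (h : Relation.ReflTransGen G.Adj x y) :
    ∃ l, G.sym.IsWalk x l y := by
  induction h with
  | refl => exact ⟨[], rfl⟩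
  | tail _ hadj ih =>
    obtain ⟨l, hl⟩ := ih
    obtain ⟨e, ⟨rfl, rfl⟩ | ⟨rfl, rfl⟩⟩ := hadj
    exacts [⟨_, hl.append (isWalk_singleton (Sum.inl e))⟩,
      ⟨_, hl.append (isWalk_singleton (Sum.inr e))⟩]

theorem WeaklyConnected.forall_of_iff (hG : G.WeaklyConnected) {P : V → Prop}
    (hP : ∀ e, P (G.src e) ↔ P (G.tgt e)) {w : V} (hw : P w) (v : V) : P v := by
  induction hG w v with
  | refl => exact hw
  | tail _ hadj ih =>
    obtain ⟨e, ⟨rfl, rfl⟩ | ⟨rfl, rfl⟩⟩ := hadj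
    exacts [(hP e).1 ih, (hP e).2 ih]

theorem Antisym.apply_swap {f : E ⊕ E → A} (hf : Antisym A f) (ee : E ⊕ E) :
    f ee.swap = - f ee := by
  cases ee with
  | inl e => exact hf e
  | inr e => exact (neg_eq_iff_eq_neg.mpr (hf e)).symm

theorem Antisym.sum_map_reverse_swap {f : E ⊕ E → A} (hf : Antisym A f) (l : List (E ⊕ E)) :
    ((l.reverse.map Sum.swap).map f).sum = - (l.map f).sum := by
  rw [List.map_map, List.map_reverse, List.sum_reverse, ← sum_map_neg]
  exact congrArg List.sum (List.map_congr_left fun ee _ => hf.apply_swap ee)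

theorem exists_potential (hG : G.WeaklyConnected) {f : E ⊕ E → A} (hf : Antisym A f)
    (hbal : BalancedE A G.sym f) (v₀ : V) :
    ∃ p : V → A, p v₀ = 0 ∧ ∀ ee, f ee = p (G.sym.tgt ee) - p (G.sym.src ee) := by
  choose W hW using fun v => exists_isWalk_sym (hG v₀ v)
  refine ⟨fun v => ((W v).map f).sum, hbal.sum_eq_zero_of_isWalk (hW v₀), fun ee => ?_⟩
  have hloop := hbal.sum_eq_zero_of_isWalk
    (((hW _).append (isWalk_singleton ee)).append (hW (G.sym.tgt ee)).reverse_swap)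
  simp only [List.map_append, List.sum_append, hf.sum_map_reverse_swap, List.map_cons,
    List.map_nil, List.sum_cons, List.sum_nil, add_zero] at hloop
  rw [eq_sub_iff_add_eq, ← sub_eq_zero, ← hloop]
  abel

theorem add_eq_zero_of_mem_WF {g : V → A} {f : E ⊕ E → A} (h : (g, f) ∈ WF A G) (e : E) :
    g (G.src e) + g (G.tgt e) = 0 := by
  have hcycle : G.sym.IsCycle [.inl e, .inr e] :=
    ⟨by simp, List.isChain_pair.mpr rfl, fun _ => rfl⟩
  have h₂ := h.2 _ hcycle
  simp only [List.map_cons, List.map_nil, List.sum_cons, List.sum_nil, add_zero] at h₂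
  have hanti : f (Sum.inr e) = - f (Sum.inl e) := h.1 e
  rw [hanti] at h₂
  rw [← h₂]
  simp only [sym, Sum.elim_inl, Sum.elim_inr]
  abel

theorem add_self_eq_zero_of_not_bipartite (hG : G.WeaklyConnected) (hB : ¬ G.Bipartite)
    {g : V → A} (hg : ∀ e, g (G.src e) + g (G.tgt e) = 0) (w : V) : g w + g w = 0 := by
  have hpm : ∀ v, g v = g w ∨ g v = - g w := by
    refine hG.forall_of_iff (fun e => ?_) (Or.inl rfl)
    rw [eq_neg_of_add_eq_zero_right (hg e), neg_inj, neg_eq_iff_eq_neg]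
    exact or_comm
  classical
  by_contra hne
  refine hB ⟨fun v => decide (g v = g w), fun e => ?_⟩
  have hw : g w ≠ - g w := fun h => hne (add_eq_zero_iff_eq_neg.mpr h)
  simp only [eq_neg_of_add_eq_zero_right (hg e)]
  rcases hpm (G.src e) with h | h <;> simp [h, hw.symm]

theorem eq_of_not_bipartite (hG : G.WeaklyConnected) (hB : ¬ G.Bipartite)
    {g : V → A} (hg : ∀ e, g (G.src e) + g (G.tgt e) = 0) (v w : V) : g v = g w := by
  refine hG.forall_of_iff (P := fun v => g v = g w) (fun e => ?_) rfl v
  rw [eq_neg_of_add_eq_zero_right (hg e), neg_eq_iff_eq_neg,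
    neg_eq_of_add_eq_zero_left (add_self_eq_zero_of_not_bipartite hG hB hg w)]

theorem const_add_coboundary_mem_WF {a : A} (ha : a ∈ Two A) (p : V → A) :
    (fun _ => a, fun ee => p (G.sym.tgt ee) - p (G.sym.src ee) + a) ∈ WF A G := by
  have ha : a + a = 0 := ha
  refine ⟨fun e => ?_, fun l hl => ?_⟩
  · show p (G.src e) - p (G.tgt e) + a = -(p (G.tgt e) - p (G.src e) + a)
    rw [neg_add, neg_eq_of_add_eq_zero_left ha]
    abel
  · rcases eq_or_ne l [] with rfl | hne
    · rfl
    rw [← sub_self (p (G.sym.src (l.head hne))), ← (hl.isWalk hne).sum_map_sub p]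
    refine congrArg List.sum (List.map_congr_left fun ee _ => ?_)
    show a + (p (G.sym.tgt ee) - p (G.sym.src ee) + a) = _
    rw [add_left_comm, ha, add_zero]

variable (A G) in
def ofPotential (v₀ : V) : Two A × vanishing A v₀ →+ WF A G where
  toFun x := ⟨_, const_add_coboundary_mem_WF x.1.2 x.2.1⟩
  map_zero' := by ext <;> simp
  map_add' x y := by ext <;> simp; abel

theorem ofPotential_injective (hG : G.WeaklyConnected) (v₀ : V) :
    Function.Injective (ofPotential A G v₀) := by
  rw [injective_iff_map_eq_zero]
  rintro ⟨⟨a, ha⟩, ⟨p, hp⟩⟩ h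
  have ha : a = 0 := congrFun (congrArg (fun x => x.1.1) h) v₀
  have hδp : ∀ ee, p (G.sym.tgt ee) - p (G.sym.src ee) + a = 0 :=
    congrFun (congrArg (fun x => x.1.2) h)
  have hp : ∀ v, p v = 0 := by
    refine hG.forall_of_iff (P := fun v => p v = 0) (fun e => ?_) hp
    have he := hδp (Sum.inl e)
    rw [ha, add_zero, sub_eq_zero] at he
    rw [show p (G.tgt e) = p (G.src e) from he]
  ext v
  exacts [ha, hp v]

theorem ofPotential_surjective (hG : G.WeaklyConnected) (hB : ¬ G.Bipartite) (v₀ : V) :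
    Function.Surjective (ofPotential A G v₀) := by
  rintro ⟨⟨g, f⟩, hgf⟩
  have hg := add_eq_zero_of_mem_WF hgf
  have ha : g v₀ + g v₀ = 0 := add_self_eq_zero_of_not_bipartite hG hB hg v₀
  have hanti : Antisym A (fun ee => f ee + g v₀) := fun e => by
    show f (Sum.inr e) + g v₀ = -(f (Sum.inl e) + g v₀)
    have hfe : f (Sum.inr e) = -f (Sum.inl e) := hgf.1 e
    rw [hfe, neg_add, neg_eq_of_add_eq_zero_left ha]
  have hbal : BalancedE A G.sym (fun ee => f ee + g v₀) := fun l hl => by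
    rw [← hgf.2 l hl]
    refine congrArg List.sum (List.map_congr_left fun ee _ => ?_)
    rw [add_comm, eq_of_not_bipartite hG hB hg]
  obtain ⟨p, hp₀, hp⟩ := exists_potential hG hanti hbal v₀
  refine ⟨(⟨g v₀, ha⟩, ⟨p, hp₀⟩), ?_⟩
  ext x
  · exact eq_of_not_bipartite hG hB hg v₀ x
  · show p (G.sym.tgt x) - p (G.sym.src x) + g v₀ = f x
    rw [← hp x, add_assoc, ha, add_zero]

end Sym

variable (A) in
def vanishingEquiv [DecidableEq V] (v₀ : V) : vanishing A v₀ ≃+ ({v // v ≠ v₀} → A) where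
  toFun p v := p.1 v
  invFun q := ⟨fun v => if h : v = v₀ then 0 else q ⟨v, h⟩, dif_pos rfl⟩
  left_inv p := by
    ext v
    by_cases h : v = v₀
    · subst h; exact (dif_pos rfl).trans p.2.symm
    · exact dif_neg h
  right_inv q := funext fun v => dif_neg v.2
  map_add' _ _ := rfl

end Dgraph

/-- For a finite weakly connected directed graph whose underlying
undirected graph is not bipartite, the group `WF(V ∪ 𝔼, A)` is isomorphic to
`A₂ × A^(|V| - 1)`, where `A₂` is the subgroup of elements of order dividing 2. -/
theorem stmt2 (V E : Type) [Fintype V] (A : Type) [AddCommGroup A]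
    (G : Dgraph V E) (hG : G.WeaklyConnected) (hB : ¬ G.Bipartite) :
    Nonempty (Dgraph.WF A G ≃+ (Dgraph.Two A × (Fin (Fintype.card V - 1) → A))) := by
  classical
  obtain ⟨e₀⟩ : Nonempty E := by
    by_contra hE
    exact hB ⟨fun _ => true, fun e => (not_nonempty_iff.mp hE).false e |>.elim⟩
  have hcard : Fintype.card {v // v ≠ G.src e₀} = Fintype.card V - 1 := by
    simp [Fintype.card_subtype_compl]
  exact ⟨(AddEquiv.ofBijective _ ⟨Dgraph.ofPotential_injective hG _,
    Dgraph.ofPotential_surjective hG hB _⟩).symm.trans <| (AddEquiv.refl _).prodCongr <|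
      (Dgraph.vanishingEquiv A _).trans <|
        AddEquiv.arrowCongr (Fintype.equivFinOfCardEq hcard) (AddEquiv.refl A)⟩
end

section
/- Let G = (V, E) be a weakly connected directed graph with k̄(G) strongly connected components and r(G) edges joining vertices in distinct strongly connected components. Then the group HR(E, A) of rigid-balanced functions on edges is isomorphic to A^(|V| - k̄(G) + r(G)). -/
/-!
Choose a root in each strongly connected component. A closed directed walk with a repeated
edge splits at that edge into two shorter closed walks, so a rigid-balanced `f` sums to zero
along every closed walk, not only along cycles with distinct edges. Hence its sum along a walk
from the root of a component to a vertex `v` of it depends only on `v`: this is a potential `g`,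
vanishing at the roots, with `f e = g (tgt e) - g (src e)` on every edge inside a component.
Conversely, any such potential together with arbitrary values on the `r(G)` edges between
components is rigid-balanced, since the edges of a cycle stay inside one component. So `HR(E, A)`
is `A` to the power of the non-root vertices and the cross edges.
-/

lemma List.exists_eq_append_cons_append_cons_of_not_nodup_s10 {α : Type*} {l : List α}
    (h : ¬ l.Nodup) :
    ∃ (l₁ : List α) (a : α) (l₂ l₃ : List α), l = l₁ ++ a :: (l₂ ++ a :: l₃) := by
  induction l with
  | nil => exact absurd List.nodup_nil h
  | cons b t ih =>
    by_cases hb : b ∈ t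
    · obtain ⟨s, u, rfl⟩ := List.append_of_mem hb
      exact ⟨[], b, s, u, rfl⟩
    · obtain ⟨l₁, a, l₂, l₃, rfl⟩ := ih fun hn => h (List.nodup_cons.mpr ⟨hb, hn⟩)
      exact ⟨b :: l₁, a, l₂, l₃, rfl⟩

namespace Dgraph

variable {V E A : Type} [AddCommGroup A]

inductive IsWalk_s10 (G : Dgraph V E) : V → V → List E → Prop
  | nil (x : V) : IsWalk_s10 G x x []
  | cons {y z : V} {l : List E} (e : E) (h : G.tgt e = y) (hw : IsWalk_s10 G y z l) :
      IsWalk_s10 G (G.src e) z (e :: l)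

variable {G : Dgraph V E} {x y z : V} {l l₁ l₂ : List E}

namespace IsWalk_s10

lemma append_s10 (h₁ : G.IsWalk_s10 x y l₁) (h₂ : G.IsWalk_s10 y z l₂) : G.IsWalk_s10 x z (l₁ ++ l₂) := by
  induction h₁ with
  | nil => exact h₂
  | cons e he _ ih => exact .cons e he (ih h₂)

lemma of_append_s10 (h : G.IsWalk_s10 x z (l₁ ++ l₂)) : ∃ y, G.IsWalk_s10 x y l₁ ∧ G.IsWalk_s10 y z l₂ := by
  induction l₁ generalizing x with
  | nil => exact ⟨x, .nil x, h⟩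
  | cons e t ih =>
    obtain _ | ⟨_, he, hw⟩ := h
    obtain ⟨y, h₁, h₂⟩ := ih hw
    exact ⟨y, .cons e he h₁, h₂⟩

lemma reach (h : G.IsWalk_s10 x y l) : G.Reach x y := by
  induction h with
  | nil => exact .refl
  | cons e he _ ih => exact .head ⟨e, rfl, he⟩ ih

lemma isChain_s10 (h : G.IsWalk_s10 x y l) : l.IsChain (fun a b => G.tgt a = G.src b) := by
  induction h with
  | nil => exact List.isChain_nil
  | cons e he hw ih =>
    cases hw with
    | nil => exact List.isChain_singleton _
    | cons => exact List.isChain_cons_cons.mpr ⟨he, ih⟩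

lemma tgt_getLast_s10 (h : G.IsWalk_s10 x y l) (hne : l ≠ []) : G.tgt (l.getLast hne) = y := by
  induction h with
  | nil => exact absurd rfl hne
  | cons e he hw ih =>
    cases hw with
    | nil => simpa using he
    | cons => rw [List.getLast_cons (List.cons_ne_nil _ _)]; exact ih _

lemma src_head_s10 (h : G.IsWalk_s10 x y l) (hne : l ≠ []) : G.src (l.head hne) = x := by
  cases h with
  | nil => exact absurd rfl hne
  | cons => rfl

lemma sum_map_eq_sub {f : E → A} {g : V → A} (h : G.IsWalk_s10 x y l)
    (hf : ∀ e ∈ l, f e = g (G.tgt e) - g (G.src e)) : (l.map f).sum = g y - g x := by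
  induction h with
  | nil => simp
  | cons e he _ ih =>
    rw [List.map_cons, List.sum_cons, hf e List.mem_cons_self,
      ih fun e' he' => hf e' (List.mem_cons_of_mem _ he'), he]
    abel

lemma scSetoid_rel_of_mem (h : G.IsWalk_s10 x y l) (hyx : G.Reach y x) {e : E} (he : e ∈ l) :
    G.scSetoid.r (G.src e) (G.tgt e) := by
  obtain ⟨l₁, l₂, rfl⟩ := List.append_of_mem he
  obtain ⟨_, h₁, _ | ⟨_, rfl, h₂⟩⟩ := h.of_append_s10
  exact ⟨.single ⟨e, rfl, rfl⟩, (h₂.reach.trans hyx).trans h₁.reach⟩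

end IsWalk_s10

lemma Reach.exists_isWalk (h : G.Reach x y) : ∃ l, G.IsWalk_s10 x y l := by
  induction h with
  | refl => exact ⟨[], .nil x⟩
  | tail _ hstep ih =>
    obtain ⟨l, hl⟩ := ih
    obtain ⟨e, rfl, he⟩ := hstep
    exact ⟨l ++ [e], hl.append_s10 (.cons e he (.nil _))⟩

lemma isWalk_of_isChain_s10 (hc : l.IsChain (fun a b => G.tgt a = G.src b)) (hne : l ≠ []) :
    G.IsWalk_s10 (G.src (l.head hne)) (G.tgt (l.getLast hne)) l := by
  induction l with
  | nil => exact absurd rfl hne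
  | cons e t ih =>
    cases t with
    | nil => exact .cons e rfl (.nil _)
    | cons e' t' =>
      obtain ⟨he, hc'⟩ := List.isChain_cons_cons.mp hc
      rw [List.getLast_cons (List.cons_ne_nil _ _)]
      exact .cons e he (ih hc' (List.cons_ne_nil _ _))

lemma IsCycle.isWalk_s10 (hc : G.IsCycle l) (hne : l ≠ []) :
    G.IsWalk_s10 (G.src (l.head hne)) (G.src (l.head hne)) l := by
  simpa only [hc.2.2 hne] using isWalk_of_isChain_s10 hc.2.1 hne

lemma IsWalk_s10.isCycle (h : G.IsWalk_s10 x x l) (hnd : l.Nodup) : G.IsCycle l :=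
  ⟨hnd, h.isChain_s10, fun hne => by rw [h.tgt_getLast_s10 hne, h.src_head_s10 hne]⟩

namespace BalancedE

variable {f : E → A}

lemma sum_eq_zero_of_isWalk_s10 (hf : BalancedE A G f) (h : G.IsWalk_s10 x x l) :
    (l.map f).sum = 0 := by
  induction hn : l.length using Nat.strong_induction_on generalizing x l with
  | _ n ih =>
    by_cases hnd : l.Nodup
    · exact hf l (h.isCycle hnd)
    obtain ⟨l₁, a, l₂, l₃, rfl⟩ := List.exists_eq_append_cons_append_cons_of_not_nodup_s10 hnd
    obtain ⟨_, h₁, _ | ⟨_, ha, h₂₃⟩⟩ := h.of_append_s10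
    obtain ⟨_, h₂, _ | ⟨_, ha', h₃⟩⟩ := h₂₃.of_append_s10
    have hcycle : ((a :: l₂).map f).sum = 0 :=
      ih _ (by simp at hn ⊢; omega) (.cons a ha h₂) rfl
    have hrest : ((l₁ ++ a :: l₃).map f).sum = 0 :=
      ih _ (by simp at hn ⊢; omega) (h₁.append_s10 (.cons a ha' h₃)) rfl
    calc ((l₁ ++ a :: (l₂ ++ a :: l₃)).map f).sum
        = ((a :: l₂).map f).sum + ((l₁ ++ a :: l₃).map f).sum := by
          simp only [List.map_append, List.map_cons, List.sum_append, List.sum_cons]; abel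
      _ = 0 := by rw [hcycle, hrest, add_zero]

lemma sum_eq_of_isWalk (hf : BalancedE A G f) (h₁ : G.IsWalk_s10 x y l₁) (h₂ : G.IsWalk_s10 x y l₂)
    (hyx : G.Reach y x) : (l₁.map f).sum = (l₂.map f).sum := by
  obtain ⟨m, hm⟩ := hyx.exists_isWalk
  have hsum : ∀ {l}, G.IsWalk_s10 x y l → (l.map f).sum = -(m.map f).sum := fun hl => by
    have := hf.sum_eq_zero_of_isWalk_s10 (hl.append_s10 hm)
    rwa [List.map_append, List.sum_append, add_eq_zero_iff_eq_neg] at this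
  rw [hsum h₁, hsum h₂]

end BalancedE

noncomputable def sccRoot (G : Dgraph V E) (v : V) : V := (Quotient.mk G.scSetoid v).out

lemma sccRoot_rel (v : V) : G.scSetoid.r (G.sccRoot v) v :=
  Quotient.exact (Quotient.out_eq _)

lemma sccRoot_eq_of_rel {v w : V} (h : G.scSetoid.r v w) : G.sccRoot v = G.sccRoot w := by
  rw [sccRoot, sccRoot, Quotient.sound h]

lemma sccRoot_sccRoot (v : V) : G.sccRoot (G.sccRoot v) = G.sccRoot v :=
  sccRoot_eq_of_rel (sccRoot_rel v)

noncomputable def sccRootEquiv (G : Dgraph V E) :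
    {v : V // G.sccRoot v = v} ≃ Quotient G.scSetoid where
  toFun v := Quotient.mk _ v.1
  invFun q := ⟨q.out, by rw [sccRoot, Quotient.out_eq]⟩
  left_inv v := Subtype.ext v.2
  right_inv := Quotient.out_eq

noncomputable def rootWalk (G : Dgraph V E) (v : V) : List E :=
  (sccRoot_rel (G := G) v).1.exists_isWalk.choose

lemma isWalk_rootWalk (v : V) : G.IsWalk_s10 (G.sccRoot v) v (G.rootWalk v) :=
  (sccRoot_rel v).1.exists_isWalk.choose_spec

noncomputable def potential (G : Dgraph V E) (f : E → A) (v : V) : A := ((G.rootWalk v).map f).sum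

lemma potential_add (f g : E → A) (v : V) :
    G.potential (f + g) v = G.potential f v + G.potential g v :=
  sum_map_add _ f g

variable {f : E → A}

lemma potential_eq_zero (hf : BalancedE A G f) {v : V} (hv : G.sccRoot v = v) :
    G.potential f v = 0 :=
  hf.sum_eq_zero_of_isWalk_s10 (hv ▸ isWalk_rootWalk v)

lemma potential_tgt (hf : BalancedE A G f) {e : E} (he : G.scSetoid.r (G.src e) (G.tgt e)) :
    G.potential f (G.tgt e) = G.potential f (G.src e) + f e := by
  have hwalk : G.IsWalk_s10 (G.sccRoot (G.tgt e)) (G.tgt e) (G.rootWalk (G.src e) ++ [e]) :=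
    sccRoot_eq_of_rel he ▸ (isWalk_rootWalk _).append_s10 (.cons e rfl (.nil _))
  simpa [potential] using
    hf.sum_eq_of_isWalk (isWalk_rootWalk _) hwalk (sccRoot_rel (G.tgt e)).2

/-- The free coordinates of a rigid-balanced function: its potential at the non-root vertices
and its values on the edges between distinct components. -/
abbrev HRIndex (G : Dgraph V E) : Type :=
  {v : V // G.sccRoot v ≠ v} ⊕ {e : E // ¬ G.scSetoid.r (G.src e) (G.tgt e)}

noncomputable def toCoords (G : Dgraph V E) (f : E → A) : G.HRIndex → A :=
  Sum.elim (fun v => G.potential f v) (fun e => f e)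

section
open Classical

noncomputable def vertexCoord (G : Dgraph V E) (a : G.HRIndex → A) (v : V) : A :=
  if h : G.sccRoot v ≠ v then a (.inl ⟨v, h⟩) else 0

noncomputable def ofCoords (G : Dgraph V E) (a : G.HRIndex → A) (e : E) : A :=
  if h : G.scSetoid.r (G.src e) (G.tgt e) then
    G.vertexCoord a (G.tgt e) - G.vertexCoord a (G.src e)
  else a (.inr ⟨e, h⟩)

lemma ofCoords_of_rel (a : G.HRIndex → A) {e : E} (he : G.scSetoid.r (G.src e) (G.tgt e)) :
    G.ofCoords a e = G.vertexCoord a (G.tgt e) - G.vertexCoord a (G.src e) :=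
  dif_pos he

lemma ofCoords_mem_HR (a : G.HRIndex → A) : G.ofCoords a ∈ HR A G := by
  intro l hl
  rcases eq_or_ne l [] with rfl | hne
  · simp
  have hw := hl.isWalk_s10 hne
  rw [hw.sum_map_eq_sub (g := G.vertexCoord a)
    fun e he => ofCoords_of_rel a (hw.scSetoid_rel_of_mem .refl he), sub_self]

lemma ofCoords_toCoords (hf : BalancedE A G f) : G.ofCoords (G.toCoords f) = f := by
  have hvertex : G.vertexCoord (G.toCoords f) = G.potential f := by
    funext v
    by_cases hv : G.sccRoot v = v
    · rw [vertexCoord, dif_neg (not_not.mpr hv), potential_eq_zero hf hv]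
    · exact dif_pos hv
  funext e
  by_cases he : G.scSetoid.r (G.src e) (G.tgt e)
  · rw [ofCoords_of_rel _ he, hvertex, potential_tgt hf he, add_sub_cancel_left]
  · exact dif_neg he

lemma toCoords_ofCoords (a : G.HRIndex → A) : G.toCoords (G.ofCoords a) = a := by
  funext i
  rcases i with ⟨v, hv⟩ | ⟨e, he⟩
  · have hsum := (isWalk_rootWalk v).sum_map_eq_sub (g := G.vertexCoord a)
      fun e he => ofCoords_of_rel a ((isWalk_rootWalk v).scSetoid_rel_of_mem (sccRoot_rel v).2 he)
    rw [toCoords, Sum.elim_inl, potential, hsum, vertexCoord, dif_pos hv, vertexCoord,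
      dif_neg (not_not.mpr (sccRoot_sccRoot v)), sub_zero]
  · exact dif_neg he

end

noncomputable def hrEquivCoords (G : Dgraph V E) : HR A G ≃+ (G.HRIndex → A) where
  toFun f := G.toCoords f.1
  invFun a := ⟨G.ofCoords a, ofCoords_mem_HR a⟩
  left_inv f := Subtype.ext (ofCoords_toCoords f.2)
  right_inv := toCoords_ofCoords
  map_add' f g := by
    funext i
    rcases i with v | e
    · exact potential_add f.1 g.1 v.1
    · rfl

lemma card_hrIndex (G : Dgraph V E) [Finite V] [Finite E] :
    Nat.card G.HRIndex = Nat.card V - G.numSCC + G.numCrossEdges := by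
  classical
  have hV : Nat.card {v : V // G.sccRoot v = v} + Nat.card {v : V // G.sccRoot v ≠ v} =
      Nat.card V := by
    rw [← Nat.card_sum, Nat.card_congr (Equiv.sumCompl _)]
  have hroots : Nat.card {v : V // G.sccRoot v = v} = G.numSCC :=
    Nat.card_congr G.sccRootEquiv
  rw [Nat.card_sum, numCrossEdges]
  omega

end Dgraph

theorem stmt10_general (V E : Type) [Fintype V] [Fintype E] (A : Type) [AddCommGroup A]
    (G : Dgraph V E) :
    Nonempty (Dgraph.HR A G ≃+
      (Fin (Nat.card V - G.numSCC + G.numCrossEdges) → A)) :=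
  ⟨(Dgraph.hrEquivCoords G).trans
    (AddEquiv.arrowCongr (Finite.equivFinOfCardEq (Dgraph.card_hrIndex G)) (AddEquiv.refl A))⟩

/-- For a finite weakly connected directed graph with `k̄(G)` strongly
connected components and `r(G)` edges joining distinct components, the group `HR(E, A)` of
rigid-balanced functions on edges is isomorphic to `A^(|V| - k̄(G) + r(G))`. -/
theorem stmt10 (V E : Type) [Fintype V] [Fintype E] (A : Type) [AddCommGroup A]
    (G : Dgraph V E) (hG : G.WeaklyConnected) :
    Nonempty (Dgraph.HR A G ≃+
      (Fin (Nat.card V - G.numSCC + G.numCrossEdges) → A)) :=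
  stmt10_general V E A G
end
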